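/- Let d > 0 and let P : [0,1] → ℝ be continuous with P > 0 on [0,1), P(1) = 0, differentiable on (0,1), satisfying dP/dq = (c−β)/d − f(q)/(d·P(q)) with f(u) = u(1−u). Then P is the unique such solution: if P₁ and P₂ both satisfy these conditions with the same c, β, then P₁ = P₂ on [0,1]. -/
import Mathlib

open Set Filter Topology

/-- One-sided comparison: under the hypotheses of `stmt3`, `P₁ ≤ P₂` on `(0,1)`. -/
lemma stmt3_aux (d β c : ℝ) (hd : 0 < d)
    (P₁ P₂ P₁' P₂' : ℝ → ℝ)
    (h₁cont : ContinuousOn P₁ (Set.Icc 0 1))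
    (h₂cont : ContinuousOn P₂ (Set.Icc 0 1))
    (h₁pos : ∀ q ∈ Set.Ico (0:ℝ) 1, 0 < P₁ q)
    (h₂pos : ∀ q ∈ Set.Ico (0:ℝ) 1, 0 < P₂ q)
    (h₁1 : P₁ 1 = 0) (h₂1 : P₂ 1 = 0)
    (h₁deriv : ∀ q ∈ Set.Ioo (0:ℝ) 1, HasDerivAt P₁ (P₁' q) q)
    (h₂deriv : ∀ q ∈ Set.Ioo (0:ℝ) 1, HasDerivAt P₂ (P₂' q) q)
    (h₁ode : ∀ q ∈ Set.Ioo (0:ℝ) 1,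
      P₁' q = (c - β) / d - (q * (1 - q)) / (d * P₁ q))
    (h₂ode : ∀ q ∈ Set.Ioo (0:ℝ) 1,
      P₂' q = (c - β) / d - (q * (1 - q)) / (d * P₂ q)) :
    ∀ a ∈ Set.Ioo (0:ℝ) 1, P₁ a ≤ P₂ a := by
  intro a ha
  by_contra hlt
  push_neg at hlt
  set W : ℝ → ℝ := fun q => P₁ q - P₂ q with hW
  obtain ⟨ε, hε, hεpos⟩ : ∃ ε, ε = W a ∧ 0 < ε :=
    ⟨W a, rfl, by simp only [hW]; linarith⟩
  have hWcont : ContinuousOn W (Set.Icc 0 1) := h₁cont.sub h₂cont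
  have haI : a ∈ Set.Icc (0:ℝ) 1 := ⟨ha.1.le, ha.2.le⟩
  have hsub : Set.Icc a 1 ⊆ Set.Icc (0:ℝ) 1 := Set.Icc_subset_Icc ha.1.le le_rfl
  -- find a point q < 1 with W q < ε/2
  have hW1 : W 1 = 0 := by simp [hW, h₁1, h₂1]
  have hcW1 : ContinuousWithinAt W (Set.Icc 0 1) 1 :=
    hWcont 1 ⟨zero_le_one, le_rfl⟩
  have htend : Filter.Tendsto W (𝓝[Set.Icc (0:ℝ) 1] 1) (𝓝 0) := by
    simpa [hW1] using hcW1.tendsto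
  have hev : ∀ᶠ q in 𝓝[Set.Icc (0:ℝ) 1] 1, W q < ε / 2 :=
    htend.eventually_lt_const (by linarith)
  have hsub' : Set.Ico a 1 ⊆ Set.Icc (0:ℝ) 1 :=
    fun x hx => ⟨le_trans ha.1.le hx.1, hx.2.le⟩
  have hev' : ∀ᶠ q in 𝓝[Set.Ico a 1] 1, W q < ε / 2 :=
    hev.filter_mono (nhdsWithin_mono _ hsub')
  haveI : (𝓝[Set.Ico a 1] (1:ℝ)).NeBot := by
    rw [← mem_closure_iff_nhdsWithin_neBot, closure_Ico (ne_of_lt ha.2)]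
    exact ⟨ha.2.le, le_rfl⟩
  obtain ⟨q₀, hq₀mem, hq₀lt⟩ :
      ∃ q₀, q₀ ∈ Set.Ico a 1 ∧ W q₀ < ε / 2 := by
    have := hev'.and (eventually_mem_nhdsWithin (s := Set.Ico a 1) (a := (1:ℝ)))
    obtain ⟨q₀, h1, h2⟩ := this.exists
    exact ⟨q₀, h2, h1⟩
  -- define b = inf of the "bad" set
  set S : Set ℝ := Set.Icc a 1 ∩ W ⁻¹' Set.Iic (ε / 2) with hS
  have hSne : S.Nonempty := ⟨q₀, ⟨⟨hq₀mem.1, hq₀mem.2.le⟩, hq₀lt.le⟩⟩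
  have hSbdd : BddBelow S := ⟨a, fun x hx => hx.1.1⟩
  have hSclosed : IsClosed S :=
    (hWcont.mono hsub).preimage_isClosed_of_isClosed isClosed_Icc isClosed_Iic
  set b : ℝ := sInf S with hb
  have hbS : b ∈ S := hSclosed.csInf_mem hSne hSbdd
  have hble : b ≤ q₀ := csInf_le hSbdd ⟨⟨hq₀mem.1, hq₀mem.2.le⟩, hq₀lt.le⟩
  have hblt1 : b < 1 := lt_of_le_of_lt hble hq₀mem.2
  have hab : a ≤ b := hbS.1.1
  have hWb : P₁ b - P₂ b ≤ ε / 2 := hbS.2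
  have haneb : a < b := by
    rcases lt_or_eq_of_le hab with h | h
    · exact h
    · exfalso
      have : ε = P₁ a - P₂ a := hε
      rw [← h] at hWb; linarith
  -- on [a, b), W > ε/2 > 0
  have hWpos : ∀ q ∈ Set.Ico a b, ε / 2 < W q := by
    intro q hq
    by_contra hle
    push_neg at hle
    have : q ∈ S := ⟨⟨hq.1, le_trans hq.2.le hblt1.le⟩, hle⟩
    exact absurd (csInf_le hSbdd this) (not_le.mpr hq.2)
  -- W is monotone on [a, b]
  have hmono : MonotoneOn W (Set.Icc a b) := by
    have hint : interior (Set.Icc a b) = Set.Ioo a b := interior_Icc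
    apply monotoneOn_of_deriv_nonneg (convex_Icc a b)
      (hWcont.mono (Set.Icc_subset_Icc ha.1.le hblt1.le))
    · intro q hq
      rw [hint] at hq
      have hq' : q ∈ Set.Ioo (0:ℝ) 1 := ⟨lt_trans ha.1 hq.1, lt_trans hq.2 hblt1⟩
      exact ((h₁deriv q hq').sub (h₂deriv q hq')).differentiableAt.differentiableWithinAt
    · intro q hq
      rw [hint] at hq
      have hq' : q ∈ Set.Ioo (0:ℝ) 1 := ⟨lt_trans ha.1 hq.1, lt_trans hq.2 hblt1⟩
      have hder : HasDerivAt W (P₁' q - P₂' q) q := (h₁deriv q hq').sub (h₂deriv q hq')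
      rw [hder.deriv, h₁ode q hq', h₂ode q hq']
      have hqpos : ε / 2 < W q := hWpos q ⟨hq.1.le, hq.2⟩
      have h2p : 0 < P₂ q := h₂pos q ⟨hq'.1.le, hq'.2⟩
      have h12 : P₂ q ≤ P₁ q := by simp only [hW] at hqpos; linarith
      have key : q * (1 - q) / (d * P₁ q) ≤ q * (1 - q) / (d * P₂ q) :=
        div_le_div_of_nonneg_left (mul_nonneg hq'.1.le (by linarith [hq'.2]))
          (by positivity) (mul_le_mul_of_nonneg_left h12 hd.le)
      linarith
  have hfin : P₁ a - P₂ a ≤ P₁ b - P₂ b := hmono ⟨le_rfl, hab⟩ ⟨hab, le_rfl⟩ hab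
  have hεa : ε = P₁ a - P₂ a := hε
  linarith

/-- Uniqueness of the trajectory through the saddle `(1,0)` lying in the strip
`{0 < q < 1, p > 0}`: two solutions of `dP/dq = (c−β)/d − f(q)/(d·P(q))` with
`P > 0` on `[0,1)`, `P(1) = 0` coincide on `[0,1]`. -/
theorem stmt3 (d β c : ℝ) (hd : 0 < d)
    (P₁ P₂ P₁' P₂' : ℝ → ℝ)
    (h₁cont : ContinuousOn P₁ (Set.Icc 0 1))
    (h₂cont : ContinuousOn P₂ (Set.Icc 0 1))
    (h₁pos : ∀ q ∈ Set.Ico (0:ℝ) 1, 0 < P₁ q)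
    (h₂pos : ∀ q ∈ Set.Ico (0:ℝ) 1, 0 < P₂ q)
    (h₁1 : P₁ 1 = 0) (h₂1 : P₂ 1 = 0)
    (h₁deriv : ∀ q ∈ Set.Ioo (0:ℝ) 1, HasDerivAt P₁ (P₁' q) q)
    (h₂deriv : ∀ q ∈ Set.Ioo (0:ℝ) 1, HasDerivAt P₂ (P₂' q) q)
    (h₁ode : ∀ q ∈ Set.Ioo (0:ℝ) 1,
      P₁' q = (c - β) / d - (q * (1 - q)) / (d * P₁ q))
    (h₂ode : ∀ q ∈ Set.Ioo (0:ℝ) 1,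
      P₂' q = (c - β) / d - (q * (1 - q)) / (d * P₂ q)) :
    ∀ q ∈ Set.Icc (0:ℝ) 1, P₁ q = P₂ q := by
  have hIoo : ∀ q ∈ Set.Ioo (0:ℝ) 1, P₁ q = P₂ q := by
    intro q hq
    exact le_antisymm
      (stmt3_aux d β c hd P₁ P₂ P₁' P₂' h₁cont h₂cont h₁pos h₂pos h₁1 h₂1
        h₁deriv h₂deriv h₁ode h₂ode q hq)
      (stmt3_aux d β c hd P₂ P₁ P₂' P₁' h₂cont h₁cont h₂pos h₁pos h₂1 h₁1
        h₂deriv h₁deriv h₂ode h₁ode q hq)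
  intro q hq
  rcases eq_or_lt_of_le hq.1 with h0 | h0
  · -- q = 0 : by continuity from the right
    subst h0
    haveI : (𝓝[Set.Ioo (0:ℝ) 1] (0:ℝ)).NeBot := by
      rw [← mem_closure_iff_nhdsWithin_neBot, closure_Ioo one_ne_zero.symm]
      exact ⟨le_rfl, zero_le_one⟩
    have hsub : Set.Ioo (0:ℝ) 1 ⊆ Set.Icc (0:ℝ) 1 := Set.Ioo_subset_Icc_self
    have h1t : Filter.Tendsto P₁ (𝓝[Set.Ioo (0:ℝ) 1] 0) (𝓝 (P₁ 0)) :=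
      ((h₁cont 0 ⟨le_rfl, zero_le_one⟩).tendsto).comp
        (tendsto_id.mono_left (nhdsWithin_mono _ hsub)) |>.congr (fun _ => rfl)
    have h2t : Filter.Tendsto P₂ (𝓝[Set.Ioo (0:ℝ) 1] 0) (𝓝 (P₂ 0)) :=
      ((h₂cont 0 ⟨le_rfl, zero_le_one⟩).tendsto).comp
        (tendsto_id.mono_left (nhdsWithin_mono _ hsub)) |>.congr (fun _ => rfl)
    have h1t' : Filter.Tendsto P₁ (𝓝[Set.Ioo (0:ℝ) 1] 0) (𝓝 (P₂ 0)) := by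
      refine h2t.congr' ?_
      filter_upwards [eventually_mem_nhdsWithin] with x hx
      exact (hIoo x hx).symm
    exact tendsto_nhds_unique h1t h1t'
  · rcases eq_or_lt_of_le hq.2 with h1 | h1
    · rw [h1, h₁1, h₂1]
    · exact hIoo q ⟨h0, h1⟩
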